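/- Let C be a coassociative coalgebra over a field k of characteristic zero with a symmetric bilinear pairing ⟨-,-⟩ satisfying the cyclicity condition ⟨v',w⟩·v'' = ⟨v,w''⟩·w' for all v,w ∈ C (in Sweedler notation). On the tensor algebra T(C), define the bracket {{v,w}} on generators v=(v₁,...,vₙ), w=(w₁,...,wₘ) by {{v,w}} = Σᵢⱼ ⟨vᵢ,wⱼ⟩·(w₁,...,wⱼ₋₁,vᵢ₊₁,...,vₙ) ⊗ (v₁,...,vᵢ₋₁,wⱼ₊₁,...,wₘ). Then {{-,-}} is a derivation in its second argument for the outer bimodule structure: {{u, v·w}} = {{u,v}}' ⊗ {{u,v}}''·w + v·{{u,w}}' ⊗ {{u,w}}'' (up to sign in the graded case). -/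

import Mathlib

/-!
On tuples the bracket is a sum over pairs of positions `(i, j)`; when the second tuple is
`m ++ n`, the positions `j` falling in `m` give `{{l, m}} · (1 ⊗ n)` and those falling in `n`
give `(m ⊗ 1) · {{l, n}}` (by induction on `m`). Both sides of the identity are linear in each
of `u`, `v`, `w`, and tuples span `T(C)`, so the identity on tuples is enough.
-/

open scoped TensorProduct

/-- Contraction in the first tensor factor: `x ⊗ y ↦ ⟨x, w⟩ • y`. -/
noncomputable def contractL (k C : Type) [Field k] [AddCommGroup C] [Module k C]
    (β : C →ₗ[k] C →ₗ[k] k) (w : C) : C ⊗[k] C →ₗ[k] C :=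
  (TensorProduct.lid k C).toLinearMap ∘ₗ LinearMap.rTensor C (β.flip w)

/-- Contraction in the second tensor factor: `x ⊗ y ↦ ⟨v, y⟩ • x`. -/
noncomputable def contractR (k C : Type) [Field k] [AddCommGroup C] [Module k C]
    (β : C →ₗ[k] C →ₗ[k] k) (v : C) : C ⊗[k] C →ₗ[k] C :=
  (TensorProduct.rid k C).toLinearMap ∘ₗ LinearMap.lTensor C (β v)

/-- The product `(v₁, …, vₙ) = ι v₁ ⋯ ι vₙ` of a tuple of generators in the tensor algebra. -/
noncomputable def listProd (k C : Type) [Field k] [AddCommGroup C] [Module k C]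
    (l : List C) : TensorAlgebra k C :=
  (l.map (TensorAlgebra.ι k)).prod

theorem LinearMap.leibniz_of_span_eq_top {R A B : Type*} [CommSemiring R] [Semiring A]
    [Algebra R A] [Semiring B] [Algebra R B] {s : Set A} (hs : Submodule.span R s = ⊤)
    (D φ ψ : A →ₗ[R] B) (h : ∀ v ∈ s, ∀ w ∈ s, D (v * w) = D v * ψ w + φ v * D w)
    (v w : A) : D (v * w) = D v * ψ w + φ v * D w := by
  have hbilinear : (LinearMap.mul R A).compr₂ D =
      (LinearMap.mul R B).compl₁₂ D ψ + (LinearMap.mul R B).compl₁₂ φ D :=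
    ext_on hs fun v hv => ext_on hs fun w hw => by simpa using h v hv w hw
  simpa using congr($hbilinear v w)

section

variable (k C : Type) [Field k] [AddCommGroup C] [Module k C]

theorem listProd_nil : listProd k C [] = 1 := rfl

theorem listProd_cons (x : C) (l : List C) :
    listProd k C (x :: l) = TensorAlgebra.ι k x * listProd k C l := by
  simp [listProd]

theorem listProd_append (l m : List C) :
    listProd k C (l ++ m) = listProd k C l * listProd k C m := by
  simp [listProd]

theorem span_range_listProd : Submodule.span k (Set.range (listProd k C)) = ⊤ := by
  have hclosure : Set.range (listProd k C) =
      Submonoid.closure (Set.range (TensorAlgebra.ι k (M := C))) := by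
    rw [Submonoid.closure_eq_image_prod, ← Set.range_list_map, ← Set.range_comp]
    rfl
  rw [hclosure, ← Algebra.adjoin_eq_span, TensorAlgebra.adjoin_range_ι, Algebra.top_toSubmodule]

variable {k C} (β : C →ₗ[k] C →ₗ[k] k)

noncomputable def doubleBracket (l m : List C) : TensorAlgebra k C ⊗[k] TensorAlgebra k C :=
  ∑ i : Fin l.length, ∑ j : Fin m.length,
    β (l.get i) (m.get j) •
      (listProd k C (m.take (j : ℕ) ++ l.drop ((i : ℕ) + 1)) ⊗ₜ[k]
        listProd k C (l.take (i : ℕ) ++ m.drop ((j : ℕ) + 1)))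

theorem doubleBracket_nil_right (l : List C) : doubleBracket β l [] = 0 := by
  simp [doubleBracket]

theorem doubleBracket_cons_right (l m : List C) (x : C) :
    doubleBracket β l (x :: m) =
      ∑ i : Fin l.length, β (l.get i) x •
          (listProd k C (l.drop ((i : ℕ) + 1)) ⊗ₜ[k] listProd k C (l.take (i : ℕ) ++ m)) +
        (TensorAlgebra.ι k x ⊗ₜ[k] 1) * doubleBracket β l m := by
  simp only [doubleBracket, Finset.mul_sum, ← Finset.sum_add_distrib]
  refine Finset.sum_congr rfl fun i _ => ?_
  refine (Fin.sum_univ_succ (n := m.length) _).trans ?_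
  simp [listProd_cons, Algebra.TensorProduct.tmul_mul_tmul]

theorem doubleBracket_append_right (l m n : List C) :
    doubleBracket β l (m ++ n) =
      doubleBracket β l m * (1 ⊗ₜ[k] listProd k C n) +
        (listProd k C m ⊗ₜ[k] 1) * doubleBracket β l n := by
  induction m with
  | nil => simp [doubleBracket_nil_right, listProd_nil, ← Algebra.TensorProduct.one_def]
  | cons x m ih =>
    simp only [List.cons_append, doubleBracket_cons_right, ih, listProd_cons, listProd_append,
      add_mul, mul_add, Finset.sum_mul, smul_mul_assoc, Algebra.TensorProduct.tmul_mul_tmul,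
      mul_one, mul_assoc]
    have hsplit : (TensorAlgebra.ι k x * listProd k C m) ⊗ₜ[k] (1 : TensorAlgebra k C) =
        (TensorAlgebra.ι k x ⊗ₜ[k] 1) * (listProd k C m ⊗ₜ[k] 1) := by
      rw [Algebra.TensorProduct.tmul_mul_tmul, mul_one]
    rw [hsplit, mul_assoc]
    abel

end

theorem stmt6_general (k C : Type) [Field k] [AddCommGroup C] [Module k C]
    (β : C →ₗ[k] C →ₗ[k] k)
    (DB : TensorAlgebra k C →ₗ[k] TensorAlgebra k C →ₗ[k]
        TensorAlgebra k C ⊗[k] TensorAlgebra k C)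
    (hDB : ∀ l m : List C,
      DB (listProd k C l) (listProd k C m) =
        ∑ i : Fin l.length, ∑ j : Fin m.length,
          β (l.get i) (m.get j) •
            (listProd k C (m.take (j : ℕ) ++ l.drop ((i : ℕ) + 1)) ⊗ₜ[k]
              listProd k C (l.take (i : ℕ) ++ m.drop ((j : ℕ) + 1)))) :
    ∀ u v w : TensorAlgebra k C,
      DB u (v * w) =
        DB u v * ((1 : TensorAlgebra k C) ⊗ₜ[k] w) +
          (v ⊗ₜ[k] (1 : TensorAlgebra k C)) * DB u w := by
  have hDB' : ∀ l m, DB (listProd k C l) (listProd k C m) = doubleBracket β l m := hDB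
  have hleibniz (l : List C) : ∀ v w, DB (listProd k C l) (v * w) =
      DB (listProd k C l) v * (1 ⊗ₜ[k] w) + (v ⊗ₜ[k] 1) * DB (listProd k C l) w := by
    refine LinearMap.leibniz_of_span_eq_top (span_range_listProd k C) _
      ((TensorProduct.mk k _ _).flip 1) (TensorProduct.mk k (TensorAlgebra k C) _ 1) ?_
    rintro _ ⟨m, rfl⟩ _ ⟨n, rfl⟩
    simpa [← listProd_append, hDB'] using doubleBracket_append_right β l m n
  intro u v w
  have hlinear : DB.flip (v * w) = LinearMap.mulRight k (1 ⊗ₜ[k] w) ∘ₗ DB.flip v +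
      LinearMap.mulLeft k (v ⊗ₜ[k] 1) ∘ₗ DB.flip w :=
    LinearMap.ext_on_range (span_range_listProd k C) fun l => by simpa using hleibniz l v w
  simpa using congr($hlinear u)

/-- Let `C` be a coassociative coalgebra over a field `k` of characteristic zero
with a symmetric bilinear pairing satisfying the cyclicity condition
`⟨v',w⟩·v'' = ⟨v,w''⟩·w'`.  On the tensor algebra `T(C)` define the bracket `{{v,w}}` on
generators `v = (v₁,…,vₙ)`, `w = (w₁,…,wₘ)` by
`{{v,w}} = Σᵢⱼ ⟨vᵢ,wⱼ⟩ · (w₁,…,wⱼ₋₁,vᵢ₊₁,…,vₙ) ⊗ (v₁,…,vᵢ₋₁,wⱼ₊₁,…,wₘ)`.  Then `{{-,-}}` is a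
derivation in its second argument for the outer bimodule structure:
`{{u, v·w}} = {{u,v}}' ⊗ {{u,v}}''·w + v·{{u,w}}' ⊗ {{u,w}}''` (ungraded case, all signs `+1`). -/
theorem stmt6 (k C : Type) [Field k] [CharZero k] [AddCommGroup C] [Module k C]
    (Δ : C →ₗ[k] C ⊗[k] C)
    (hcoassoc : (TensorProduct.assoc k C C C).toLinearMap ∘ₗ
        LinearMap.rTensor C Δ ∘ₗ Δ = LinearMap.lTensor C Δ ∘ₗ Δ)
    (β : C →ₗ[k] C →ₗ[k] k)
    (hsym : ∀ v w : C, β v w = β w v)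
    (hcyc : ∀ v w : C, contractL k C β w (Δ v) = contractR k C β v (Δ w))
    (DB : TensorAlgebra k C →ₗ[k] TensorAlgebra k C →ₗ[k]
        TensorAlgebra k C ⊗[k] TensorAlgebra k C)
    (hDB : ∀ l m : List C,
      DB (listProd k C l) (listProd k C m) =
        ∑ i : Fin l.length, ∑ j : Fin m.length,
          β (l.get i) (m.get j) •
            (listProd k C (m.take (j : ℕ) ++ l.drop ((i : ℕ) + 1)) ⊗ₜ[k]
              listProd k C (l.take (i : ℕ) ++ m.drop ((j : ℕ) + 1)))) :
    ∀ u v w : TensorAlgebra k C,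
      DB u (v * w) =
        DB u v * ((1 : TensorAlgebra k C) ⊗ₜ[k] w) +
          (v ⊗ₜ[k] (1 : TensorAlgebra k C)) * DB u w :=
  stmt6_general k C β DB hDB
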